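/- There is a constant C > 0 such that for every f ∈ L¹(ℝ) and every α > 0, λ{x ∈ ℝ : P*f(x) > α} ≤ (C/α) ‖f‖₁, where P*f(x) = sup_{y > 0} ∫_ℝ P_y(x−t)|f(t)| dt. -/

import Mathlib

/-!
The Poisson kernel is dominated by dyadic layers,
`P_y(u) ≤ ∑ₖ (π 4ᵏ y)⁻¹ 𝟙{|u| ≤ 2ᵏ⁺¹ y}`, whose masses `2ᵏ⁺¹ y / (π 4ᵏ y)` sum to `4 / π`.
So if `∫_{B(x,r)} |f| ≤ β r` for every `r > 0`, the Poisson integral of `|f|` at `(x, y)` is at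
most `4β/π`. Hence `{P*f > α}` consists of centres of balls `B(x, r)` with
`∫_{B(x,r)} |f| > παr/4`, and the Vitali covering lemma (enlargement factor 4) bounds its measure
by `32 ‖f‖₁ / (πα)`.
-/

open Real MeasureTheory

noncomputable def realPoissonKernel (y x : ℝ) : ℝ := (1 / π) * (y / (x ^ 2 + y ^ 2))

open scoped ENNReal
open Metric

lemma lintegral_mul_le_tsum_of_le_tsum_indicator {α ι : Type*} [MeasurableSpace α] [Countable ι]
    {μ : Measure α} {φ g : α → ℝ≥0∞} (hg : AEMeasurable g μ) {s : ι → Set α}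
    (hs : ∀ k, MeasurableSet (s k)) (c B : ι → ℝ≥0∞)
    (hφ : ∀ t, φ t ≤ ∑' k, (s k).indicator (fun _ => c k) t)
    (hB : ∀ k, ∫⁻ t in s k, g t ∂μ ≤ B k) :
    ∫⁻ t, φ t * g t ∂μ ≤ ∑' k, c k * B k :=
  calc ∫⁻ t, φ t * g t ∂μ
      ≤ ∫⁻ t, ∑' k, (s k).indicator (fun t => c k * g t) t ∂μ := by
        refine lintegral_mono fun t => (mul_le_mul_left (hφ t) _).trans_eq ?_
        rw [← ENNReal.tsum_mul_right]
        exact tsum_congr fun k => by by_cases h : t ∈ s k <;> simp [h]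
    _ = ∑' k, c k * ∫⁻ t in s k, g t ∂μ := by
        rw [lintegral_tsum fun k => (hg.const_mul _).indicator (hs k)]
        exact tsum_congr fun k => by
          rw [lintegral_indicator (hs k), lintegral_const_mul'' _ hg.restrict]
    _ ≤ ∑' k, c k * B k := ENNReal.tsum_le_tsum fun k => mul_le_mul_right (hB k) _

lemma exists_dyadic_scale {y : ℝ} (hy : 0 < y) (u : ℝ) :
    ∃ k : ℕ, |u| ≤ 2 ^ (k + 1) * y ∧ (2 ^ k) ^ 2 * y ^ 2 ≤ u ^ 2 + y ^ 2 := by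
  rcases lt_or_ge |u| y with hu | hu
  · exact ⟨0, by norm_num; linarith, by nlinarith⟩
  · obtain ⟨k, hlo, hhi⟩ := exists_nat_pow_near ((one_le_div hy).2 hu) one_lt_two
    rw [le_div_iff₀ hy] at hlo
    rw [div_lt_iff₀ hy] at hhi
    refine ⟨k, hhi.le, ?_⟩
    have : (2 ^ k * y) ^ 2 ≤ |u| ^ 2 := pow_le_pow_left₀ (by positivity) hlo 2
    rw [sq_abs] at this
    nlinarith

namespace realPoissonKernel

lemma nonneg {y : ℝ} (hy : 0 ≤ y) (u : ℝ) : 0 ≤ realPoissonKernel y u := by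
  unfold realPoissonKernel
  positivity

lemma le_of_mul_sq_le {y c u : ℝ} (hy : 0 < y) (hc : 0 < c) (h : c * y ^ 2 ≤ u ^ 2 + y ^ 2) :
    realPoissonKernel y u ≤ 1 / (π * c * y) := by
  unfold realPoissonKernel
  rw [one_div_mul_eq_div, div_div, div_le_div_iff₀ (by positivity) (by positivity)]
  have := Real.pi_pos
  nlinarith

lemma le_tsum_indicator_closedBall {y : ℝ} (hy : 0 < y) (x t : ℝ) :
    ENNReal.ofReal (realPoissonKernel y (x - t)) ≤
      ∑' k : ℕ, (closedBall x (2 ^ (k + 1) * y)).indicator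
        (fun _ => ENNReal.ofReal (1 / (π * (2 ^ k) ^ 2 * y))) t := by
  obtain ⟨k, hball, hscale⟩ := exists_dyadic_scale hy (x - t)
  have hmem : t ∈ closedBall x (2 ^ (k + 1) * y) := by
    rwa [mem_closedBall, dist_comm, Real.dist_eq]
  refine le_trans ?_ (ENNReal.le_tsum k)
  rw [Set.indicator_of_mem hmem]
  exact ENNReal.ofReal_le_ofReal (le_of_mul_sq_le hy (by positivity) hscale)

lemma ofReal_integral_mul_abs_le_lintegral {y : ℝ} (hy : 0 ≤ y) (f : ℝ → ℝ) (x : ℝ) :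
    ENNReal.ofReal (∫ t, realPoissonKernel y (x - t) * |f t|) ≤
      ∫⁻ t, ENNReal.ofReal (realPoissonKernel y (x - t)) * ‖f t‖ₑ := by
  refine (Real.ofReal_le_enorm _).trans ((enorm_integral_le_lintegral_enorm _).trans_eq ?_)
  refine lintegral_congr fun t => ?_
  rw [enorm_mul, enorm_abs, Real.enorm_of_nonneg (nonneg hy _)]

lemma lintegral_mul_le_of_lintegral_closedBall_le {g : ℝ → ℝ≥0∞} (hg : AEMeasurable g)
    {x y β : ℝ} (hy : 0 < y) (hβ : 0 ≤ β)
    (hball : ∀ r > 0, ∫⁻ t in closedBall x r, g t ≤ ENNReal.ofReal (β * r)) :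
    ∫⁻ t, ENNReal.ofReal (realPoissonKernel y (x - t)) * g t ≤ ENNReal.ofReal (4 * β / π) :=
  calc ∫⁻ t, ENNReal.ofReal (realPoissonKernel y (x - t)) * g t
      ≤ ∑' k : ℕ, ENNReal.ofReal (1 / (π * (2 ^ k) ^ 2 * y)) *
          ENNReal.ofReal (β * (2 ^ (k + 1) * y)) :=
        lintegral_mul_le_tsum_of_le_tsum_indicator hg (fun _ => measurableSet_closedBall) _ _
          (le_tsum_indicator_closedBall hy x) fun k => hball _ (by positivity)
    _ = ∑' k : ℕ, ENNReal.ofReal (4 * β / π / 2 / 2 ^ k) := by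
        refine tsum_congr fun k => ?_
        rw [← ENNReal.ofReal_mul (by positivity)]
        congr 1
        field_simp
        ring
    _ = ENNReal.ofReal (4 * β / π) := by
        rw [← ENNReal.ofReal_tsum_of_nonneg (fun k => by positivity) (summable_geometric_two' _),
          tsum_geometric_two']

end realPoissonKernel

lemma volume_setOf_lt_lintegral_closedBall_le (g : ℝ → ℝ≥0∞) {β : ℝ} (hβ : 0 < β) :
    volume {x | ∃ r > 0, ENNReal.ofReal (β * r) < ∫⁻ t in closedBall x r, g t} ≤
      ENNReal.ofReal (8 / β) * ∫⁻ t, g t := by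
  set E := {x | ∃ r > 0, ENNReal.ofReal (β * r) < ∫⁻ t in closedBall x r, g t}
  rcases eq_or_ne (∫⁻ t, g t) ∞ with hinf | hfin
  · rw [hinf, ENNReal.mul_top (by simpa using hβ)]
    exact le_top
  choose! ρ hρpos hρ using fun x (hx : x ∈ E) => hx
  -- Vitali's lemma needs bounded radii; the finite total mass bounds them.
  have hρR : ∀ x ∈ E, ρ x ≤ (∫⁻ t, g t).toReal / β := fun x hx => by
    rw [le_div_iff₀ hβ, mul_comm]
    refine (ENNReal.ofReal_lt_iff_lt_toReal (by nlinarith [hρpos x hx]) hfin).1 ?_ |>.le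
    exact (hρ x hx).trans_le (setLIntegral_le_lintegral _ _)
  obtain ⟨u, huE, hdisj, hcover⟩ :=
    Vitali.exists_disjoint_subfamily_covering_enlargement_closedBall E id ρ _ hρR 4 (by norm_num)
  have hcov : E ⊆ ⋃ b ∈ u, closedBall b (4 * ρ b) := fun x hx => by
    obtain ⟨b, hb, hsub⟩ := hcover x hx
    exact Set.mem_biUnion hb (hsub (mem_closedBall_self (hρpos x hx).le))
  have hu : u.Countable := hdisj.countable_of_nonempty_interior fun b hb =>
    ⟨b, ball_subset_interior_closedBall (mem_ball_self (hρpos b (huE hb)))⟩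
  let μ := volume.withDensity g
  calc volume E ≤ ∑' b : u, volume (closedBall (b : ℝ) (4 * ρ b)) :=
        (measure_mono hcov).trans (measure_biUnion_le volume hu _)
    _ ≤ ∑' b : u, ENNReal.ofReal (8 / β) * μ (closedBall (b : ℝ) (ρ b)) := by
        refine ENNReal.tsum_le_tsum fun b => ?_
        rw [Real.volume_closedBall, withDensity_apply _ measurableSet_closedBall]
        calc ENNReal.ofReal (2 * (4 * ρ b))
            = ENNReal.ofReal (8 / β) * ENNReal.ofReal (β * ρ b) := by
              rw [← ENNReal.ofReal_mul (by positivity)]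
              congr 1
              field_simp
              ring
          _ ≤ _ := mul_le_mul_right (hρ b (huE b.2)).le _
    _ = ENNReal.ofReal (8 / β) * ∑' b : u, μ (closedBall (b : ℝ) (ρ b)) := ENNReal.tsum_mul_left
    _ ≤ ENNReal.ofReal (8 / β) * μ Set.univ := by
        refine mul_le_mul_right (tsum_measure_le_measure_univ
          (fun b => measurableSet_closedBall.nullMeasurableSet) fun b c hbc => ?_) _
        exact (hdisj b.2 c.2 (Subtype.coe_injective.ne hbc)).aedisjoint
    _ = ENNReal.ofReal (8 / β) * ∫⁻ t, g t := by
        rw [withDensity_apply _ MeasurableSet.univ, Measure.restrict_univ]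

theorem poisson_maximal_theorem :
    ∃ C : ℝ, 0 < C ∧ ∀ f : ℝ → ℝ, Integrable f → ∀ α : ℝ, 0 < α →
      volume {x : ℝ | ∃ y : ℝ, 0 < y ∧ α < ∫ t : ℝ, realPoissonKernel y (x - t) * |f t|}
        ≤ ENNReal.ofReal ((C / α) * ∫ t : ℝ, |f t|) := by
  refine ⟨32 / π, by positivity, fun f hf α hα => ?_⟩
  have hsub : {x : ℝ | ∃ y : ℝ, 0 < y ∧ α < ∫ t : ℝ, realPoissonKernel y (x - t) * |f t|} ⊆
      {x | ∃ r > 0, ENNReal.ofReal (π * α / 4 * r) < ∫⁻ t in closedBall x r, ‖f t‖ₑ} := by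
    rintro x ⟨y, hy, hlt⟩
    by_contra hx
    have hball : ∀ r > 0, ∫⁻ t in closedBall x r, ‖f t‖ₑ ≤ ENNReal.ofReal (π * α / 4 * r) := by
      simpa using hx
    have hpoisson := realPoissonKernel.lintegral_mul_le_of_lintegral_closedBall_le
      hf.1.enorm hy (by positivity) hball
    rw [show 4 * (π * α / 4) / π = α by field_simp] at hpoisson
    exact hlt.not_ge <| (ENNReal.ofReal_le_ofReal_iff hα.le).1 <|
      (realPoissonKernel.ofReal_integral_mul_abs_le_lintegral hy.le f x).trans hpoisson
  calc _ ≤ _ := measure_mono hsub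
    _ ≤ ENNReal.ofReal (8 / (π * α / 4)) * ∫⁻ t, ‖f t‖ₑ :=
        volume_setOf_lt_lintegral_closedBall_le _ (by positivity)
    _ = ENNReal.ofReal ((32 / π / α) * ∫ t : ℝ, |f t|) := by
        rw [← ofReal_integral_norm_eq_lintegral_enorm hf, ← ENNReal.ofReal_mul (by positivity)]
        simp only [Real.norm_eq_abs]
        congr 1
        field_simp
        ring
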